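/- For every λ > 1 and every integer k ≥ 1, m_{2k}(λ) = −(λ^{2k} − 1)^{−1} · Σ_{j=0}^{k−1} C(2k, 2j) · λ^{2j} · E_{2(k−j)} · m_{2j}(λ). -/

import Mathlib

/-!
Write `S = S(λ)` and `S' = ∑ λ^{-n} X_{n+1}`. Then `λ S = X₁ + S'`, where `S'` has the law of `S`
and is independent of the symmetric sign `X₁`; expanding `E[(λ S)^{2k}]` gives the even binomial
relation `λ^{2k} m_{2k} = ∑_{j ≤ k} C(2k, 2j) m_{2j}`, i.e. `E[e^{tλS}] = cosh t · E[e^{tS}]`.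
Multiplying by `sech t` inverts it, and isolating the `j = k` term gives the recursion.
-/

open MeasureTheory ProbabilityTheory Finset
open scoped ENNReal

theorem sum_choose_mul_euler_sub_eq_ite (E : ℕ → ℝ) (hE0 : E 0 = 1)
    (hE : ∀ n : ℕ, 1 ≤ n → ∑ j ∈ range (n + 1), ((2 * n).choose (2 * j) : ℝ) * E (2 * j) = 0)
    (n : ℕ) :
    ∑ j ∈ range (n + 1), ((2 * n).choose (2 * j) : ℝ) * E (2 * (n - j)) =
      if n = 0 then 1 else 0 := by
  rcases Nat.eq_zero_or_pos n with rfl | hn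
  · simp [hE0]
  rw [if_neg hn.ne', ← hE n hn, ← sum_range_reflect]
  refine sum_congr rfl fun j hj => ?_
  have hjn : j ≤ n := Nat.lt_succ_iff.mp (mem_range.mp hj)
  rw [show n + 1 - 1 - j = n - j by omega, show n - (n - j) = j by omega,
    show 2 * (n - j) = 2 * n - 2 * j by omega, Nat.choose_symm (by omega)]

theorem sum_choose_mul_euler_mul_eq_of_eq_sum_choose (E : ℕ → ℝ) (hE0 : E 0 = 1)
    (hE : ∀ n : ℕ, 1 ≤ n → ∑ j ∈ range (n + 1), ((2 * n).choose (2 * j) : ℝ) * E (2 * j) = 0)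
    {a b : ℕ → ℝ} (hab : ∀ k, b k = ∑ j ∈ range (k + 1), ((2 * k).choose (2 * j) : ℝ) * a j)
    (k : ℕ) :
    ∑ j ∈ range (k + 1), ((2 * k).choose (2 * j) : ℝ) * E (2 * (k - j)) * b j = a k := by
  have hinner : ∀ i ∈ Ico 0 (k + 1), ∑ j ∈ Ico i (k + 1),
      ((2 * k).choose (2 * j) : ℝ) * E (2 * (k - j)) * (((2 * j).choose (2 * i) : ℝ) * a i) =
        if i = k then a k else 0 := by
    intro i hi
    have hik : i ≤ k := Nat.lt_succ_iff.mp (mem_Ico.mp hi).2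
    have hterm : ∀ j ∈ range (k + 1 - i),
        ((2 * k).choose (2 * (i + j)) : ℝ) * E (2 * (k - (i + j))) *
            (((2 * (i + j)).choose (2 * i) : ℝ) * a i) =
          ((2 * k).choose (2 * i) : ℝ) * a i *
            (((2 * (k - i)).choose (2 * j) : ℝ) * E (2 * (k - i - j))) := by
      intro j _
      have hchoose := Nat.choose_mul (n := 2 * k) (show 2 * i ≤ 2 * (i + j) by omega)
      rw [show 2 * k - 2 * i = 2 * (k - i) by omega, show 2 * (i + j) - 2 * i = 2 * j by omega]
        at hchoose
      have hchooseR : ((2 * k).choose (2 * (i + j)) : ℝ) * ((2 * (i + j)).choose (2 * i) : ℝ) =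
          ((2 * k).choose (2 * i) : ℝ) * ((2 * (k - i)).choose (2 * j) : ℝ) := by
        exact_mod_cast hchoose
      rw [show k - (i + j) = k - i - j by omega]
      linear_combination (E (2 * (k - i - j)) * a i) * hchooseR
    rw [sum_Ico_eq_sum_range, sum_congr rfl hterm, ← mul_sum,
      show k + 1 - i = k - i + 1 by omega, sum_choose_mul_euler_sub_eq_ite E hE0 hE]
    by_cases h : i = k
    · simp [h]
    · simp [h, show k - i ≠ 0 by omega]
  calc ∑ j ∈ range (k + 1), ((2 * k).choose (2 * j) : ℝ) * E (2 * (k - j)) * b j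
      = ∑ j ∈ Ico 0 (k + 1), ∑ i ∈ Ico 0 (j + 1),
          ((2 * k).choose (2 * j) : ℝ) * E (2 * (k - j)) *
            (((2 * j).choose (2 * i) : ℝ) * a i) := by
        simp only [hab, mul_sum, range_eq_Ico]
    _ = ∑ i ∈ Ico 0 (k + 1), ∑ j ∈ Ico i (k + 1),
          ((2 * k).choose (2 * j) : ℝ) * E (2 * (k - j)) *
            (((2 * j).choose (2 * i) : ℝ) * a i) :=
        (sum_Ico_Ico_comm _ _ _).symm
    _ = a k := by
        rw [sum_congr rfl hinner, sum_ite_eq']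
        simp

theorem sum_range_two_mul_add_one_of_odd {M : Type*} [AddCommMonoid M] (f : ℕ → M)
    (k : ℕ) (hf : ∀ i ≤ 2 * k, Odd i → f i = 0) :
    ∑ i ∈ range (2 * k + 1), f i = ∑ j ∈ range (k + 1), f (2 * j) := by
  induction k with
  | zero => simp
  | succ k ih =>
    rw [sum_range_succ (fun j => f (2 * j)), ← ih fun i hi => hf i (by omega),
      show 2 * (k + 1) + 1 = 2 * k + 1 + 1 + 1 by ring, sum_range_succ, sum_range_succ,
      hf _ (by omega) (odd_two_mul_add_one k), add_zero]
    rfl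

noncomputable def invPowSum (l : ℝ) (a : ℕ → ℝ) : ℝ := ∑' n : ℕ, l ^ (-(n + 1 : ℤ)) * a n

theorem measurable_invPowSum (l : ℝ) : Measurable (invPowSum l) :=
  Measurable.tsum fun n => (measurable_pi_apply n).const_mul _

section InvPowSum

variable {l : ℝ} {a : ℕ → ℝ}

theorem zpow_neg_natCast_add_one (l : ℝ) (n : ℕ) : l ^ (-(n + 1 : ℤ)) = l⁻¹ ^ (n + 1) := by
  rw [← zpow_natCast, inv_zpow', Nat.cast_succ]

theorem hasSum_inv_pow_add_one (hl : 1 < l) : HasSum (fun n : ℕ => l⁻¹ ^ (n + 1)) (l - 1)⁻¹ := by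
  have hsum : l⁻¹ * (1 - l⁻¹)⁻¹ = (l - 1)⁻¹ := by
    have : l - 1 ≠ 0 := by linarith
    field_simp
  have hgeom := hasSum_geometric_of_lt_one (inv_nonneg.mpr (by linarith)) (inv_lt_one_of_one_lt₀ hl)
  simpa only [hsum, ← pow_succ'] using hgeom.mul_left l⁻¹

theorem norm_zpow_mul_le (hl : 1 < l) (ha : ∀ n, |a n| ≤ 1) (n : ℕ) :
    ‖l ^ (-(n + 1 : ℤ)) * a n‖ ≤ l⁻¹ ^ (n + 1) := by
  have hpos : 0 ≤ l⁻¹ ^ (n + 1) := pow_nonneg (inv_nonneg.mpr (by linarith)) _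
  rw [zpow_neg_natCast_add_one, norm_mul, Real.norm_eq_abs, Real.norm_eq_abs, abs_of_nonneg hpos]
  exact mul_le_of_le_one_right hpos (ha n)

theorem abs_invPowSum_le (hl : 1 < l) (ha : ∀ n, |a n| ≤ 1) : |invPowSum l a| ≤ (l - 1)⁻¹ :=
  tsum_of_norm_bounded (hasSum_inv_pow_add_one hl) (norm_zpow_mul_le hl ha)

theorem mul_invPowSum (hl : 1 < l) (ha : ∀ n, |a n| ≤ 1) :
    l * invPowSum l a = a 0 + invPowSum l (fun n => a (n + 1)) := by
  have hl0 : l ≠ 0 := by positivity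
  have hsummable : Summable fun n : ℕ => l ^ (-(n + 1 : ℤ)) * a n :=
    Summable.of_norm_bounded (hasSum_inv_pow_add_one hl).summable (norm_zpow_mul_le hl ha)
  rw [invPowSum, hsummable.tsum_eq_zero_add, mul_add, ← tsum_mul_left, invPowSum]
  congr 1
  · simp [hl0]
  · refine tsum_congr fun n => ?_
    rw [zpow_neg_natCast_add_one, zpow_neg_natCast_add_one, pow_succ' _ (n + 1), ← mul_assoc,
      ← mul_assoc, mul_inv_cancel₀ hl0, one_mul]

end InvPowSum

theorem integrable_pow_of_ae_abs_le {Ω : Type*} [MeasurableSpace Ω] {P : Measure Ω}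
    [IsFiniteMeasure P] {f : Ω → ℝ} (hf : AEStronglyMeasurable f P) {C : ℝ}
    (hC : ∀ᵐ ω ∂P, |f ω| ≤ C) (i : ℕ) : Integrable (fun ω => f ω ^ i) P :=
  Integrable.of_bound (hf.pow i) (C ^ i) (hC.mono fun ω h => by
    rw [Real.norm_eq_abs, abs_pow]; exact pow_le_pow_left₀ (abs_nonneg _) h i)

noncomputable def rademacherMeasure : Measure ℝ :=
  (2⁻¹ : ℝ≥0∞) • (Measure.dirac 1 + Measure.dirac (-1))

theorem integral_pow_rademacherMeasure (i : ℕ) :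
    ∫ x, x ^ i ∂rademacherMeasure = if Even i then 1 else 0 := by
  rw [rademacherMeasure, integral_smul_measure, integral_add_measure (integrable_dirac (by simp))
    (integrable_dirac (by simp)), integral_dirac, integral_dirac]
  rcases Nat.even_or_odd i with h | h
  · norm_num [h, h.neg_one_pow]
  · simp [Nat.not_even_iff_odd.mpr h, h.neg_one_pow]

section Sign

variable {Ω : Type*} [MeasurableSpace Ω] {P : Measure Ω} [IsProbabilityMeasure P] {Z : Ω → ℝ}

theorem ae_eq_one_or_eq_neg_one (hZ : Measurable Z) (h1 : P {ω | Z ω = 1} = 1 / 2)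
    (h2 : P {ω | Z ω = -1} = 1 / 2) : ∀ᵐ ω ∂P, Z ω = 1 ∨ Z ω = -1 := by
  have hmeas : ∀ c : ℝ, MeasurableSet {ω | Z ω = c} := fun c => hZ (measurableSet_singleton c)
  have hdisj : Disjoint {ω | Z ω = 1} {ω | Z ω = -1} :=
    Set.disjoint_left.mpr fun ω (h : Z ω = 1) (h' : Z ω = -1) => by linarith
  have hunion : P ({ω | Z ω = 1} ∪ {ω | Z ω = -1}) = P Set.univ := by
    rw [measure_union hdisj (hmeas (-1)), h1, h2, ENNReal.add_halves, measure_univ]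
  exact (ae_mem_iff_measure_eq ((hmeas 1).union (hmeas (-1))).nullMeasurableSet).mpr hunion

theorem map_eq_rademacherMeasure (hZ : Measurable Z) (h1 : P {ω | Z ω = 1} = 1 / 2)
    (h2 : P {ω | Z ω = -1} = 1 / 2) : P.map Z = rademacherMeasure := by
  have hsupp : ∀ᵐ x ∂P.map Z, x ∈ ({1} ∪ {-1} : Set ℝ) :=
    (ae_map_iff hZ.aemeasurable (by measurability)).mpr (ae_eq_one_or_eq_neg_one hZ h1 h2)
  rw [← Measure.restrict_eq_self_of_ae_mem hsupp, Measure.restrict_union (by norm_num)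
    (measurableSet_singleton _), Measure.restrict_singleton, Measure.restrict_singleton,
    Measure.map_apply hZ (measurableSet_singleton _),
    Measure.map_apply hZ (measurableSet_singleton _)]
  simp only [Set.preimage, Set.mem_singleton_iff]
  rw [h1, h2, rademacherMeasure, smul_add, one_div]

end Sign

namespace ProbabilityTheory

variable {Ω : Type*} [MeasurableSpace Ω] {P : Measure Ω}

theorem iIndepFun.indepFun_zero_tail {β : Type*} [MeasurableSpace β] {X : ℕ → Ω → β}
    (hX : ∀ n, Measurable (X n)) (h : iIndepFun X P) :
    IndepFun (X 0) (fun ω n => X (n + 1) ω) P := by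
  have hdisj : Disjoint ({0} : Set ℕ) (Set.range Nat.succ) :=
    Set.disjoint_singleton_left.mpr fun ⟨n, hn⟩ => Nat.succ_ne_zero n hn
  have hind := indep_iSup_of_disjoint (fun n => (hX n).comap_le) h.iIndep hdisj
  have htail : MeasurableSpace.comap (fun ω n => X (n + 1) ω) MeasurableSpace.pi =
      ⨆ n, MeasurableSpace.comap (X (n + 1)) inferInstance := by
    simp only [MeasurableSpace.pi, MeasurableSpace.comap_iSup, MeasurableSpace.comap_comp]
    rfl
  rw [_root_.iSup_singleton, iSup_range] at hind
  rw [IndepFun_iff_Indep, htail]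
  exact hind

variable {T Z : Ω → ℝ}

theorem IndepFun.integral_add_pow (hTZ : IndepFun T Z P)
    (hTi : ∀ i, Integrable (fun ω => T ω ^ i) P) (hZi : ∀ i, Integrable (fun ω => Z ω ^ i) P)
    (n : ℕ) :
    ∫ ω, (T ω + Z ω) ^ n ∂P =
      ∑ i ∈ range (n + 1), (∫ ω, T ω ^ i ∂P) * (∫ ω, Z ω ^ (n - i) ∂P) * (n.choose i : ℝ) := by
  have hpow : ∀ i j, IndepFun (fun ω => T ω ^ i) (fun ω => Z ω ^ j) P := fun i j =>
    hTZ.comp (measurable_id.pow_const i) (measurable_id.pow_const j)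
  simp_rw [add_pow]
  refine (integral_finsetSum _ fun i _ =>
    ((hpow i (n - i)).integrable_mul (hTi i) (hZi _)).mul_const _).trans
    (sum_congr rfl fun i _ => ?_)
  rw [integral_mul_const, (hpow i (n - i)).integral_mul_eq_mul_integral
    (hTi i).aestronglyMeasurable (hZi _).aestronglyMeasurable]

theorem IndepFun.integral_add_pow_two_mul (hTZ : IndepFun T Z P)
    (hTi : ∀ i, Integrable (fun ω => T ω ^ i) P) (hZi : ∀ i, Integrable (fun ω => Z ω ^ i) P)
    (hZmom : ∀ i, ∫ ω, Z ω ^ i ∂P = if Even i then 1 else 0) (k : ℕ) :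
    ∫ ω, (T ω + Z ω) ^ (2 * k) ∂P =
      ∑ j ∈ range (k + 1), ((2 * k).choose (2 * j) : ℝ) * ∫ ω, T ω ^ (2 * j) ∂P := by
  rw [hTZ.integral_add_pow hTi hZi, sum_range_two_mul_add_one_of_odd]
  · refine sum_congr rfl fun j hj => ?_
    have hjk : j ≤ k := Nat.lt_succ_iff.mp (mem_range.mp hj)
    rw [hZmom, if_pos (by rw [← Nat.mul_sub]; exact even_two_mul _)]
    ring
  · intro i hi hodd
    rw [hZmom, if_neg (by simp [Nat.even_sub hi, Nat.not_even_iff_odd.mpr hodd]), mul_zero,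
      zero_mul]

end ProbabilityTheory

theorem pow_mul_integral_invPowSum_pow_eq_sum {Ω : Type*} [MeasurableSpace Ω] {P : Measure Ω}
    [IsProbabilityMeasure P] {X : ℕ → Ω → ℝ} (hmeas : ∀ n, Measurable (X n))
    (hindep : iIndepFun X P) (h1 : ∀ n, P {ω | X n ω = 1} = 1 / 2)
    (h2 : ∀ n, P {ω | X n ω = -1} = 1 / 2) {l : ℝ} (hl : 1 < l) (k : ℕ) :
    l ^ (2 * k) * ∫ ω, invPowSum l (fun n => X n ω) ^ (2 * k) ∂P =
      ∑ j ∈ range (k + 1),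
        ((2 * k).choose (2 * j) : ℝ) * ∫ ω, invPowSum l (fun n => X n ω) ^ (2 * j) ∂P := by
  set T : Ω → ℝ := fun ω => invPowSum l (fun n => X (n + 1) ω)
  have hlaw : ∀ n, P.map (X n) = rademacherMeasure :=
    fun n => map_eq_rademacherMeasure (hmeas n) (h1 n) (h2 n)
  have hbdd : ∀ᵐ ω ∂P, ∀ n, |X n ω| ≤ 1 := ae_all_iff.mpr fun n =>
    (ae_eq_one_or_eq_neg_one (hmeas n) (h1 n) (h2 n)).mono fun ω h => by
      rcases h with h | h <;> simp [h]
  have hident : IdentDistrib (fun ω n => X n ω) (fun ω n => X (n + 1) ω) P P :=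
    IdentDistrib.pi (fun n => ⟨(hmeas n).aemeasurable, (hmeas (n + 1)).aemeasurable,
      by rw [hlaw, hlaw]⟩) hindep (hindep.precomp Nat.succ_injective)
  have hTmom : ∀ j, ∫ ω, T ω ^ j ∂P = ∫ ω, invPowSum l (fun n => X n ω) ^ j ∂P := fun j =>
    (hident.comp ((measurable_invPowSum l).pow_const j)).integral_eq.symm
  have hshift : ∀ᵐ ω ∂P, l * invPowSum l (fun n => X n ω) = T ω + X 0 ω :=
    hbdd.mono fun ω h => by rw [mul_invPowSum hl h, add_comm]
  have hindT : IndepFun T (X 0) P :=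
    ((hindep.indepFun_zero_tail hmeas).comp measurable_id (measurable_invPowSum l)).symm
  have hTi : ∀ i, Integrable (fun ω => T ω ^ i) P :=
    integrable_pow_of_ae_abs_le ((measurable_invPowSum l).comp
      (measurable_pi_lambda _ fun n => hmeas (n + 1))).aestronglyMeasurable
      (hbdd.mono fun ω h => abs_invPowSum_le hl fun n => h (n + 1))
  have hZi : ∀ i, Integrable (fun ω => X 0 ω ^ i) P :=
    integrable_pow_of_ae_abs_le (hmeas 0).aestronglyMeasurable (hbdd.mono fun ω h => h 0)
  have hZmom : ∀ i, ∫ ω, X 0 ω ^ i ∂P = if Even i then 1 else 0 := fun i => by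
    rw [← integral_pow_rademacherMeasure, ← hlaw 0,
      integral_map (hmeas 0).aemeasurable (by fun_prop)]
  calc l ^ (2 * k) * ∫ ω, invPowSum l (fun n => X n ω) ^ (2 * k) ∂P
      = ∫ ω, (l * invPowSum l (fun n => X n ω)) ^ (2 * k) ∂P := by
        rw [← integral_const_mul]; simp_rw [mul_pow]
    _ = ∫ ω, (T ω + X 0 ω) ^ (2 * k) ∂P :=
        integral_congr_ae (hshift.mono fun ω h => by simp only [h])
    _ = _ := by
        rw [hindT.integral_add_pow_two_mul hTi hZi hZmom]
        simp_rw [hTmom]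

/-- `m_(2k)(λ) = -(λ^(2k) - 1)⁻¹ ∑_{j=0}^{k-1} C(2k,2j) λ^(2j) E_(2(k-j)) m_(2j)(λ)`,
where `E` are the Euler numbers of even index. -/
theorem stmt_7 {Ω : Type*} [MeasurableSpace Ω] (P : Measure Ω) [IsProbabilityMeasure P]
    (X : ℕ → Ω → ℝ) (hmeas : ∀ n, Measurable (X n))
    (hindep : iIndepFun X P)
    (h1 : ∀ n, P {ω | X n ω = 1} = 1 / 2) (h2 : ∀ n, P {ω | X n ω = -1} = 1 / 2)
    (S : ℝ → Ω → ℝ)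
    (hS : ∀ l : ℝ, 1 < l → ∀ ω, S l ω = ∑' n : ℕ, l ^ (-(n + 1 : ℤ)) * X n ω)
    (m : ℝ → ℕ → ℝ) (hm : ∀ l k, m l k = ∫ ω, (S l ω) ^ k ∂P)
    (E : ℕ → ℝ) (hE0 : E 0 = 1)
    (hE : ∀ n : ℕ, 1 ≤ n → ∑ j ∈ Finset.range (n + 1), ((2 * n).choose (2 * j) : ℝ) * E (2 * j) = 0)
    (l : ℝ) (hl : 1 < l) (k : ℕ) (hk : 1 ≤ k) :
    m l (2 * k) = -(l ^ (2 * k) - 1)⁻¹ *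
      ∑ j ∈ Finset.range k,
        ((2 * k).choose (2 * j) : ℝ) * l ^ (2 * j) * E (2 * (k - j)) * m l (2 * j) := by
  have hmoment : ∀ j, m l j = ∫ ω, invPowSum l (fun n => X n ω) ^ j ∂P := fun j => by
    simp only [hm, hS l hl, invPowSum]
  have hinv := sum_choose_mul_euler_mul_eq_of_eq_sum_choose E hE0 hE
    (a := fun j => m l (2 * j)) (b := fun j => l ^ (2 * j) * m l (2 * j)) (fun K => by
      simpa only [hmoment] using pow_mul_integral_invPowSum_pow_eq_sum hmeas hindep h1 h2 hl K) k
  rw [sum_range_succ, Nat.choose_self, Nat.sub_self, mul_zero, hE0, Nat.cast_one, one_mul,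
    one_mul] at hinv
  have hne : l ^ (2 * k) - 1 ≠ 0 := (sub_pos.mpr (one_lt_pow₀ hl (by omega))).ne'
  have hreorder : ∑ j ∈ range k,
      ((2 * k).choose (2 * j) : ℝ) * l ^ (2 * j) * E (2 * (k - j)) * m l (2 * j) =
        ∑ j ∈ range k,
          ((2 * k).choose (2 * j) : ℝ) * E (2 * (k - j)) * (l ^ (2 * j) * m l (2 * j)) :=
    sum_congr rfl fun j _ => by ring
  rw [hreorder, eq_sub_of_add_eq hinv]
  field_simp
  ring
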